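/- Let q be a prime, let F_{q^r} be the field with q^r elements with Frobenius automorphism φ : x ↦ x^q, let k divide r and r/k divide n, and let the cyclic group C_n = ⟨σ⟩ act on F_{q^r} via η(σ) = φ^k. Then the group H²_η(C_n, F_{q^r}^*) of 2-cocycles modulo 2-coboundaries for this action is a cyclic group of order gcd(q^k − 1, nk/r). -/

import Mathlib

/-!
For a cyclic group `C_n = ⟨σ⟩`, sending a 2-cocycle `f` to `∏_{i<n} f(σ^i, σ)` induces
`H²(C_n, F^*) ≅ (F^*)^{C_n} / N(F^*)`: a coboundary `dr` goes to the norm of `r σ`; a cocycle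
whose invariant is a norm is the coboundary of an explicit `n`-periodic cochain; and the carry
cocycle `(σ^i, σ^j) ↦ a^{⌊(i+j)/n⌋}` (`0 ≤ i, j < n`) has invariant `a`.

For `F = F_{Q^t}` with `Q = q^k`, `σ` acting as `x ↦ x^Q` and `n = t w`, everything happens in
the cyclic group `F^*` of order `Q^t - 1`: the fixed units are its `(Q-1)`-torsion and the norm
is `x ↦ x^s` with `s = 1 + Q + ⋯ + Q^{n-1} ≡ w (1 + Q + ⋯ + Q^{t-1}) (mod Q^t - 1)`, so the
quotient has order `gcd(Q^t - 1, s) / (1 + Q + ⋯ + Q^{t-1}) = gcd(Q - 1, w)`.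
-/

def IsTwoCocycle {G F : Type*} [Group G] [Field F] (η : G →* RingAut F)
    (f : G → G → Fˣ) : Prop :=
  ∀ g h k : G, η g (f h k : F) * ((f g (h * k) : Fˣ) : F) =
    ((f g h : Fˣ) : F) * ((f (g * h) k : Fˣ) : F)

def IsTwoCoboundary {G F : Type*} [Group G] [Field F] (η : G →* RingAut F)
    (f : G → G → Fˣ) : Prop :=
  ∃ r : G → Fˣ, ∀ g h : G,
    (f g h : F) = (r g : F) * η g (r h : F) * (((r (g * h))⁻¹ : Fˣ) : F)

def Cohomologous {G F : Type*} [Group G] [Field F] (η : G →* RingAut F)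
    (f₁ f₂ : G → G → Fˣ) : Prop :=
  IsTwoCoboundary η fun g h => f₁ g h * (f₂ g h)⁻¹

/-- The group of 2-cocycles, as a subgroup of all functions `G → G → Fˣ`. -/
def twoCocycles {G F : Type*} [Group G] [Field F] (η : G →* RingAut F) :
    Subgroup (G → G → Fˣ) where
  carrier := {f | IsTwoCocycle η f}
  one_mem' := by intro g h k; simp
  mul_mem' := by
    intro a b ha hb g h k
    simp only [Pi.mul_apply, Units.val_mul, map_mul]
    rw [mul_mul_mul_comm, ha g h k, hb g h k, mul_mul_mul_comm]
  inv_mem' := by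
    intro a ha g h k
    simp only [Pi.inv_apply, Units.val_inv_eq_inv_val, map_inv₀]
    rw [← mul_inv, ← mul_inv, ha g h k]

/-- The group of 2-coboundaries, as a subgroup of all functions `G → G → Fˣ`. -/
def twoCoboundaries {G F : Type*} [Group G] [Field F] (η : G →* RingAut F) :
    Subgroup (G → G → Fˣ) where
  carrier := {f | IsTwoCoboundary η f}
  one_mem' := ⟨1, by intro g h; simp⟩
  mul_mem' := by
    rintro a b ⟨r, hr⟩ ⟨t, ht⟩
    refine ⟨r * t, fun g h => ?_⟩
    simp only [Pi.mul_apply, Units.val_mul, map_mul, mul_inv, hr g h, ht g h,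
      Units.val_inv_eq_inv_val]
    ring
  inv_mem' := by
    rintro a ⟨r, hr⟩
    refine ⟨r⁻¹, fun g h => ?_⟩
    simp only [Pi.inv_apply, Units.val_inv_eq_inv_val, map_inv₀, hr g h, inv_inv, mul_inv]

/-- The second cohomology group `H²_η(G, F^*)`: 2-cocycles modulo 2-coboundaries. -/
abbrev H2 {G F : Type*} [Group G] [Field F] (η : G →* RingAut F) :=
  twoCocycles η ⧸ ((twoCoboundaries η).subgroupOf (twoCocycles η))

/-- The norm map `x ↦ ∏_{i=0}^{n-1} σ^i(x)` on `F^*`. -/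
def cyclicNormHom {G F : Type*} [Group G] [Field F] (η : G →* RingAut F) (σ : G) (n : ℕ) :
    Fˣ →* Fˣ where
  toFun x := ∏ i ∈ Finset.range n, Units.map (η (σ ^ i)).toMonoidHom x
  map_one' := by simp
  map_mul' x y := by simp [Finset.prod_mul_distrib]

/-- The subgroup `(F^*)^{C_n}` of elements of `F^*` fixed by the action. -/
def fixedUnits {G F : Type*} [Group G] [Field F] (η : G →* RingAut F) :
    Subgroup Fˣ where
  carrier := {x | ∀ g : G, η g (x : F) = (x : F)}
  one_mem' := by intro g; simp
  mul_mem' := by intro a b ha hb g; simp [ha g, hb g]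
  inv_mem' := by intro a ha g; simp [ha g]

lemma Nat.add_div_eq_div_add_mod_add_div (x y n : ℕ) :
    (x + y) / n = x / n + (x % n + y) / n := by
  rcases n.eq_zero_or_pos with rfl | hn
  · simp
  conv_lhs => rw [← Nat.mod_add_div x n, add_right_comm, Nat.add_mul_div_left _ _ hn]
  ring

lemma Nat.sum_range_add_one_div {n : ℕ} (hn : 0 < n) :
    ∑ i ∈ Finset.range n, (i + 1) / n = 1 := by
  obtain ⟨m, rfl⟩ : ∃ m, n = m + 1 := ⟨n - 1, by omega⟩
  rw [Finset.sum_range_succ, Finset.sum_eq_zero, zero_add, Nat.div_self m.succ_pos]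
  intro i hi
  exact Nat.div_eq_of_lt (by simpa using hi)

lemma Nat.geom_sum_range_mul_modEq {Q : ℕ} (hQ : 1 ≤ Q) (t w : ℕ) :
    ∑ i ∈ Finset.range (t * w), Q ^ i ≡ w * ∑ i ∈ Finset.range t, Q ^ i
      [MOD Q ^ t - 1] := by
  have hQt : Q ^ t ≡ 1 [MOD Q ^ t - 1] := Nat.modEq_sub (Nat.one_le_pow _ _ hQ)
  induction w with
  | zero => simp [Nat.ModEq.refl]
  | succ w ih =>
    rw [Nat.mul_succ, Finset.sum_range_add, add_mul, one_mul]
    refine ih.add ?_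
    simp only [pow_add, ← Finset.mul_sum, pow_mul]
    simpa using (hQt.pow w).mul_right (∑ i ∈ Finset.range t, Q ^ i)

lemma Nat.gcd_pow_sub_one_geom_sum {Q : ℕ} (hQ : 1 ≤ Q) (t w : ℕ) :
    Nat.gcd (Q ^ t - 1) (∑ i ∈ Finset.range (t * w), Q ^ i) =
      Nat.gcd (Q - 1) w * ∑ i ∈ Finset.range t, Q ^ i := by
  rw [Nat.gcd_comm, (Nat.geom_sum_range_mul_modEq hQ t w).gcd_eq, Nat.gcd_comm,
    ← geom_sum_mul_of_one_le hQ, mul_comm, Nat.gcd_mul_right]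

lemma IsCyclic.relIndex_range_powMonoidHom_ker_powMonoidHom {M : Type*} [CommGroup M]
    [IsCyclic M] [Finite M] {s d : ℕ}
    (h : (powMonoidHom s : M →* M).range ≤ (powMonoidHom d : M →* M).ker) :
    (powMonoidHom s : M →* M).range.relIndex (powMonoidHom d : M →* M).ker =
      (Nat.card M).gcd s / (Nat.card M / (Nat.card M).gcd d) := by
  rw [← IsCyclic.index_powMonoidHom_range, ← IsCyclic.index_powMonoidHom_ker,
    ← Subgroup.relIndex_mul_index h,
    Nat.mul_div_cancel _ (Nat.pos_of_ne_zero Subgroup.index_ne_zero_of_finite)]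

section Action

variable {G F : Type*} [Group G] [Field F] (η : G →* RingAut F)

def unitsAct (g : G) : Fˣ →* Fˣ := Units.map (η g).toMonoidHom

@[simp] lemma val_unitsAct (g : G) (x : Fˣ) : (unitsAct η g x : F) = η g x := rfl

@[simp] lemma unitsAct_one_apply (x : Fˣ) : unitsAct η 1 x = x := by
  ext; simp

lemma unitsAct_mul_apply (g h : G) (x : Fˣ) :
    unitsAct η (g * h) x = unitsAct η g (unitsAct η h x) := by
  ext; simp

lemma isTwoCocycle_iff (f : G → G → Fˣ) :
    IsTwoCocycle η f ↔
      ∀ g h k, unitsAct η g (f h k) * f g (h * k) = f g h * f (g * h) k := by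
  simp only [IsTwoCocycle, Units.ext_iff, Units.val_mul, val_unitsAct]

lemma isTwoCoboundary_iff (f : G → G → Fˣ) :
    IsTwoCoboundary η f ↔
      ∃ r : G → Fˣ, ∀ g h, f g h = r g * unitsAct η g (r h) * (r (g * h))⁻¹ := by
  simp only [IsTwoCoboundary, Units.ext_iff, Units.val_mul, val_unitsAct]

lemma mem_fixedUnits_of_unitsAct_eq {σ : G} (hgen : ∀ g : G, g ∈ Subgroup.zpowers σ)
    {x : Fˣ} (hx : unitsAct η σ x = x) : x ∈ fixedUnits η := by
  let stab := (MulAction.stabilizer (RingAut F) (x : F)).comap η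
  have hσ : σ ∈ stab := congrArg Units.val hx
  exact fun g => (Subgroup.zpowers_le.mpr hσ) (hgen g)

lemma cyclicNormHom_apply (σ : G) (n : ℕ) (u : Fˣ) :
    cyclicNormHom η σ n u = ∏ i ∈ Finset.range n, unitsAct η (σ ^ i) u := rfl

lemma cyclicNormHom_add (σ : G) (a b : ℕ) (u : Fˣ) :
    cyclicNormHom η σ (a + b) u =
      cyclicNormHom η σ a u * unitsAct η (σ ^ a) (cyclicNormHom η σ b u) := by
  simp only [cyclicNormHom_apply, map_prod, Finset.prod_range_add, pow_add, unitsAct_mul_apply]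

@[simp] lemma cyclicNormHom_one (σ : G) (u : Fˣ) : cyclicNormHom η σ 1 u = u := by
  simp [cyclicNormHom_apply]

lemma cyclicNormHom_add_of_pow_eq_one {σ : G} {n : ℕ} (hσ : σ ^ n = 1) (j : ℕ) (u : Fˣ) :
    cyclicNormHom η σ (n + j) u = cyclicNormHom η σ n u * cyclicNormHom η σ j u := by
  rw [cyclicNormHom_add, hσ, unitsAct_one_apply]

lemma cyclicNormHom_mem_fixedUnits {σ : G} {n : ℕ} (hσ : σ ^ n = 1)
    (hgen : ∀ g : G, g ∈ Subgroup.zpowers σ) (u : Fˣ) :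
    cyclicNormHom η σ n u ∈ fixedUnits η := by
  have h := cyclicNormHom_add η σ 1 n u
  rw [add_comm, cyclicNormHom_add, hσ, pow_one, cyclicNormHom_one, unitsAct_one_apply] at h
  exact mem_fixedUnits_of_unitsAct_eq η hgen (mul_left_cancel (h.symm.trans (mul_comm _ _)))

end Action

section Invariant

variable {G F : Type*} [Group G] [Field F] {η : G →* RingAut F} {σ : G} {n : ℕ}

lemma IsTwoCocycle.apply_one_right {f : G → G → Fˣ} (hf : IsTwoCocycle η f) (g : G) :
    f g 1 = unitsAct η g (f 1 1) := by
  have h := (isTwoCocycle_iff η f).mp hf g 1 1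
  simp only [mul_one] at h
  exact (mul_right_cancel (h.trans (mul_comm _ _))).symm

variable (σ) in
def cocycleProd (f : G → G → Fˣ) (j : ℕ) : Fˣ :=
  ∏ i ∈ Finset.range j, f (σ ^ i) σ

variable (σ) in
@[simp] lemma cocycleProd_zero (f : G → G → Fˣ) : cocycleProd σ f 0 = 1 :=
  Finset.prod_range_zero _

variable (σ) in
lemma cocycleProd_succ (f : G → G → Fˣ) (j : ℕ) :
    cocycleProd σ f (j + 1) = cocycleProd σ f j * f (σ ^ j) σ :=
  Finset.prod_range_succ _ _

lemma cocycleProd_add_of_pow_eq_one (hσ : σ ^ n = 1) (f : G → G → Fˣ) (j : ℕ) :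
    cocycleProd σ f (n + j) = cocycleProd σ f n * cocycleProd σ f j := by
  simp only [cocycleProd, Finset.prod_range_add, pow_add, hσ, one_mul]

variable (σ) in
lemma IsTwoCocycle.apply_pow_pow {f : G → G → Fˣ} (hf : IsTwoCocycle η f) (a b : ℕ) :
    f (σ ^ a) (σ ^ b) * cocycleProd σ f a * unitsAct η (σ ^ a) (cocycleProd σ f b) =
      cocycleProd σ f (a + b) * unitsAct η (σ ^ a) (f 1 1) := by
  induction b with
  | zero =>
    rw [pow_zero, hf.apply_one_right, add_zero, cocycleProd_zero, map_one, mul_one, mul_comm]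
  | succ b ih =>
    have h := (isTwoCocycle_iff η f).mp hf (σ ^ a) (σ ^ b) σ
    rw [← pow_succ, ← pow_add] at h
    rw [cocycleProd_succ, map_mul, ← add_assoc, cocycleProd_succ]
    calc _ = (unitsAct η (σ ^ a) (f (σ ^ b) σ) * f (σ ^ a) (σ ^ (b + 1))) *
          (cocycleProd σ f a * unitsAct η (σ ^ a) (cocycleProd σ f b)) := by ac_rfl
      _ = (f (σ ^ a) (σ ^ b) * cocycleProd σ f a * unitsAct η (σ ^ a) (cocycleProd σ f b)) *
          f (σ ^ (a + b)) σ := by rw [h]; ac_rfl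
      _ = _ := by rw [ih]; ac_rfl

lemma IsTwoCocycle.cocycleProd_mem_fixedUnits {f : G → G → Fˣ} (hf : IsTwoCocycle η f)
    (hσ : σ ^ n = 1) (hgen : ∀ g : G, g ∈ Subgroup.zpowers σ) :
    cocycleProd σ f n ∈ fixedUnits η := by
  refine mem_fixedUnits_of_unitsAct_eq η hgen ?_
  have h := hf.apply_pow_pow σ 1 n
  rw [pow_one, hσ, hf.apply_one_right, add_comm, cocycleProd_add_of_pow_eq_one hσ] at h
  refine mul_left_cancel (a := unitsAct η σ (f 1 1) * cocycleProd σ f 1) ?_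
  rw [h]
  ac_rfl

lemma cocycleProd_eq_cyclicNormHom_of_coboundary (hσ : σ ^ n = 1) {f : G → G → Fˣ}
    (r : G → Fˣ) (hfr : ∀ g h, f g h = r g * unitsAct η g (r h) * (r (g * h))⁻¹) :
    cocycleProd σ f n = cyclicNormHom η σ n (r σ) := by
  have htel : ∏ i ∈ Finset.range n, r (σ ^ i) / r (σ ^ (i + 1)) = 1 := by
    rw [Finset.prod_range_div' (fun i => r (σ ^ i)), hσ, pow_zero, div_self']
  calc cocycleProd σ f n
      = ∏ i ∈ Finset.range n,
          unitsAct η (σ ^ i) (r σ) * (r (σ ^ i) / r (σ ^ (i + 1))) := by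
        refine Finset.prod_congr rfl fun i _ => ?_
        rw [hfr, pow_succ, div_eq_mul_inv]
        ac_rfl
    _ = cyclicNormHom η σ n (r σ) := by
        rw [Finset.prod_mul_distrib, htel, mul_one, cyclicNormHom_apply]

end Invariant

section Kernel

variable {G F : Type*} [Group G] [Field F] {η : G →* RingAut F} {σ : G} {n : ℕ}

lemma exists_discreteLog (hn : 0 < n) (hord : orderOf σ = n)
    (hgen : ∀ g : G, g ∈ Subgroup.zpowers σ) :
    ∃ e : G → ℕ, (∀ g, σ ^ e g = g) ∧ ∀ j, e (σ ^ j) = j % n := by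
  have hfin : IsOfFinOrder σ := orderOf_pos_iff.mp (hord ▸ hn)
  refine ⟨fun g => (finEquivZPowers hfin).symm ⟨g, hgen g⟩, fun g => ?_, fun j => ?_⟩
  · exact pow_finEquivZPowers_symm_apply hfin ⟨g, hgen g⟩
  · rw [← hord]
    exact congrArg Fin.val (finEquivZPowers_symm_apply hfin j)

variable (η σ) in
/-- For every `u`, `f (σ ^ a) (σ ^ b)` is the coboundary of this cochain on exponents; it descends
to `G` when it is `n`-periodic, i.e. when `cocycleProd σ f n` is the norm of `u`. -/
def trivializingCochain (f : G → G → Fˣ) (u : Fˣ) (j : ℕ) : Fˣ :=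
  (cocycleProd σ f j)⁻¹ * cyclicNormHom η σ j u * f 1 1

lemma IsTwoCocycle.apply_pow_pow_eq {f : G → G → Fˣ} (hf : IsTwoCocycle η f) (u : Fˣ)
    (a b : ℕ) :
    f (σ ^ a) (σ ^ b) = trivializingCochain η σ f u a *
      unitsAct η (σ ^ a) (trivializingCochain η σ f u b) *
      (trivializingCochain η σ f u (a + b))⁻¹ := by
  have h := hf.apply_pow_pow σ a b
  rw [← eq_mul_inv_iff_mul_eq, mul_assoc, ← eq_mul_inv_iff_mul_eq] at h
  rw [h, trivializingCochain, trivializingCochain, trivializingCochain, cyclicNormHom_add,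
    map_mul, map_mul, map_inv]
  apply Additive.ofMul.injective
  simp only [ofMul_mul, ofMul_inv]
  abel

lemma trivializingCochain_periodic (hσ : σ ^ n = 1) {f : G → G → Fˣ} {u : Fˣ}
    (hu : cocycleProd σ f n = cyclicNormHom η σ n u) :
    Function.Periodic (trivializingCochain η σ f u) n := fun j => by
  rw [trivializingCochain, trivializingCochain, add_comm, cocycleProd_add_of_pow_eq_one hσ,
    cyclicNormHom_add_of_pow_eq_one η hσ, hu, mul_inv]
  apply Additive.ofMul.injective
  simp only [ofMul_mul, ofMul_inv]
  abel

lemma IsTwoCocycle.isTwoCoboundary_of_cocycleProd_eq (hn : 0 < n) (hord : orderOf σ = n)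
    (hgen : ∀ g : G, g ∈ Subgroup.zpowers σ) {f : G → G → Fˣ} (hf : IsTwoCocycle η f)
    {u : Fˣ} (hu : cocycleProd σ f n = cyclicNormHom η σ n u) :
    IsTwoCoboundary η f := by
  obtain ⟨e, hσe, he⟩ := exists_discreteLog hn hord hgen
  have hσ : σ ^ n = 1 := hord ▸ pow_orderOf_eq_one σ
  have hρ := trivializingCochain_periodic hσ hu
  refine (isTwoCoboundary_iff η f).mpr
    ⟨fun g => trivializingCochain η σ f u (e g), fun g h => ?_⟩
  obtain ⟨a, rfl⟩ : ∃ a, σ ^ a = g := ⟨e g, hσe g⟩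
  obtain ⟨b, rfl⟩ : ∃ b, σ ^ b = h := ⟨e h, hσe h⟩
  simp only [← pow_add, he, hρ.map_mod_nat]
  exact hf.apply_pow_pow_eq u a b

end Kernel

section Carry

variable {G F : Type*} [Group G] [Field F] {η : G →* RingAut F} {σ : G} {n : ℕ}

def carryCocycle (e : G → ℕ) (n : ℕ) (y : Fˣ) (g h : G) : Fˣ := y ^ ((e g + e h) / n)

lemma isTwoCocycle_carryCocycle {e : G → ℕ} (hσe : ∀ g, σ ^ e g = g)
    (he : ∀ j, e (σ ^ j) = j % n) {y : Fˣ} (hy : y ∈ fixedUnits η) :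
    IsTwoCocycle η (carryCocycle e n y) := by
  have hmul : ∀ g h, e (g * h) = (e g + e h) % n := fun g h => by
    rw [← he, pow_add, hσe, hσe]
  have hfix : ∀ g, unitsAct η g y = y := fun g => Units.ext (hy g)
  refine (isTwoCocycle_iff η _).mpr fun g h k => ?_
  simp only [carryCocycle, map_pow, hfix, ← pow_add, hmul]
  congr 1
  rw [← Nat.add_div_eq_div_add_mod_add_div, add_comm (e g) ((e h + e k) % n),
    ← Nat.add_div_eq_div_add_mod_add_div, add_comm (e h + e k) (e g), add_assoc]

lemma cocycleProd_carryCocycle (hn : 1 < n) {e : G → ℕ} (he : ∀ j, e (σ ^ j) = j % n)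
    (y : Fˣ) : cocycleProd σ (carryCocycle e n y) n = y := by
  have he1 : e σ = 1 := by rw [← pow_one σ, he, Nat.mod_eq_of_lt hn]
  calc cocycleProd σ (carryCocycle e n y) n = ∏ i ∈ Finset.range n, y ^ ((i + 1) / n) :=
        Finset.prod_congr rfl fun i hi => by
          rw [carryCocycle, he, he1, Nat.mod_eq_of_lt (Finset.mem_range.mp hi)]
    _ = y := by rw [Finset.prod_pow_eq_pow_sum, Nat.sum_range_add_one_div (by omega), pow_one]

end Carry

section Isomorphism

variable {G F : Type*} [Group G] [Field F] (η : G →* RingAut F) {σ : G} {n : ℕ}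

/-- The Tate cohomology group `Ĥ⁰(C_n, F^*) = (F^*)^{C_n} / N(F^*)`. -/
abbrev FixedUnitsModNorms (σ : G) (n : ℕ) :=
  fixedUnits η ⧸ (cyclicNormHom η σ n).range.subgroupOf (fixedUnits η)

def cocycleInvariant (hord : orderOf σ = n) (hgen : ∀ g : G, g ∈ Subgroup.zpowers σ) :
    twoCocycles η →* fixedUnits η where
  toFun f := ⟨cocycleProd σ f n,
    IsTwoCocycle.cocycleProd_mem_fixedUnits f.2 (hord ▸ pow_orderOf_eq_one σ) hgen⟩
  map_one' := Subtype.ext (by simp [cocycleProd])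
  map_mul' _ _ := Subtype.ext (by simp [cocycleProd, Finset.prod_mul_distrib])

def h2Invariant (hord : orderOf σ = n) (hgen : ∀ g : G, g ∈ Subgroup.zpowers σ) :
    twoCocycles η →* FixedUnitsModNorms η σ n :=
  (QuotientGroup.mk' _).comp (cocycleInvariant η hord hgen)

variable (hn : 0 < n) (hord : orderOf σ = n) (hgen : ∀ g : G, g ∈ Subgroup.zpowers σ)
include hn hord

lemma ker_h2Invariant :
    (h2Invariant η hord hgen).ker = (twoCoboundaries η).subgroupOf (twoCocycles η) := by
  have hσ : σ ^ n = 1 := hord ▸ pow_orderOf_eq_one σ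
  ext ⟨f, hf⟩
  rw [MonoidHom.mem_ker, h2Invariant, MonoidHom.comp_apply, QuotientGroup.mk'_apply,
    QuotientGroup.eq_one_iff, Subgroup.mem_subgroupOf, Subgroup.mem_subgroupOf]
  constructor
  · rintro ⟨u, hu⟩
    exact IsTwoCocycle.isTwoCoboundary_of_cocycleProd_eq hn hord hgen hf hu.symm
  · intro hcob
    obtain ⟨r, hr⟩ := (isTwoCoboundary_iff η f).mp hcob
    exact ⟨r σ, (cocycleProd_eq_cyclicNormHom_of_coboundary hσ r hr).symm⟩

lemma h2Invariant_surjective : Function.Surjective (h2Invariant η hord hgen) := by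
  intro x
  induction x using QuotientGroup.induction_on with | H y => ?_
  rcases (show n = 1 ∨ 1 < n by omega) with rfl | hn2
  · refine ⟨1, ?_⟩
    rw [map_one, eq_comm, QuotientGroup.eq_one_iff]
    exact ⟨y, cyclicNormHom_one η σ y⟩
  · obtain ⟨e, hσe, he⟩ := exists_discreteLog hn hord hgen
    exact ⟨⟨carryCocycle e n (y : Fˣ), isTwoCocycle_carryCocycle hσe he y.2⟩,
      congrArg QuotientGroup.mk (Subtype.ext (cocycleProd_carryCocycle hn2 he (y : Fˣ)))⟩

noncomputable def h2MulEquivFixedUnitsModNorms : H2 η ≃* FixedUnitsModNorms η σ n :=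
  (QuotientGroup.quotientMulEquivOfEq (ker_h2Invariant η hn hord hgen)).symm.trans
    (QuotientGroup.quotientKerEquivOfSurjective _ (h2Invariant_surjective η hn hord hgen))

end Isomorphism

section FrobeniusAction

variable {G F : Type*} [Group G] [Field F] {η : G →* RingAut F} {σ : G} {Q : ℕ}

lemma apply_pow_apply_eq_pow_pow (hη : ∀ x : F, η σ x = x ^ Q) (i : ℕ) (x : F) :
    η (σ ^ i) x = x ^ Q ^ i := by
  induction i generalizing x with
  | zero => simp
  | succ i ih => rw [pow_succ, map_mul, RingAut.mul_apply, hη, map_pow, ih, ← pow_mul, pow_succ]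

lemma cyclicNormHom_eq_powMonoidHom (hη : ∀ x : F, η σ x = x ^ Q) (n : ℕ) :
    cyclicNormHom η σ n = powMonoidHom (∑ i ∈ Finset.range n, Q ^ i) := by
  ext u
  simp only [cyclicNormHom_apply, powMonoidHom_apply, Units.coe_prod, val_unitsAct,
    apply_pow_apply_eq_pow_pow hη, Units.val_pow_eq_pow_val, Finset.prod_pow_eq_pow_sum]

lemma fixedUnits_eq_ker_powMonoidHom (hgen : ∀ g : G, g ∈ Subgroup.zpowers σ)
    (hη : ∀ x : F, η σ x = x ^ Q) (hQ : 1 ≤ Q) :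
    fixedUnits η = (powMonoidHom (Q - 1) : Fˣ →* Fˣ).ker := by
  ext u
  rw [MonoidHom.mem_ker, powMonoidHom_apply]
  constructor
  · intro hu
    have h : u ^ (Q - 1) * u = 1 * u := by
      rw [← pow_succ, Nat.sub_add_cancel hQ, one_mul]
      exact Units.ext ((hη u).symm.trans (hu σ))
    exact mul_right_cancel h
  · intro hu
    refine mem_fixedUnits_of_unitsAct_eq η hgen (Units.ext ?_)
    rw [val_unitsAct, hη, ← Units.val_pow_eq_pow_val, ← Nat.sub_add_cancel hQ, pow_succ, hu,
      one_mul]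

end FrobeniusAction

lemma card_fixedUnitsModNorms {G F : Type*} [Group G] [Field F] [Finite F]
    {η : G →* RingAut F} {σ : G} {Q t w : ℕ} (hgen : ∀ g : G, g ∈ Subgroup.zpowers σ)
    (hσ : σ ^ (t * w) = 1) (hη : ∀ x : F, η σ x = x ^ Q) (hQ : 2 ≤ Q) (ht : 0 < t)
    (hF : Nat.card F = Q ^ t) :
    Nat.card (FixedUnitsModNorms η σ (t * w)) = Nat.gcd (Q - 1) w := by
  have hle : (cyclicNormHom η σ (t * w)).range ≤ fixedUnits η := by
    rintro _ ⟨u, rfl⟩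
    exact cyclicNormHom_mem_fixedUnits η hσ hgen u
  have hgeom : (∑ i ∈ Finset.range t, Q ^ i) * (Q - 1) = Q ^ t - 1 :=
    geom_sum_mul_of_one_le (by omega) t
  have hgeom_pos : 0 < ∑ i ∈ Finset.range t, Q ^ i := geom_sum_pos (by omega) ht.ne'
  have hcard : Nat.card Fˣ = Q ^ t - 1 := by rw [Nat.card_units, hF]
  change (cyclicNormHom η σ (t * w)).range.relIndex (fixedUnits η) = _
  rw [fixedUnits_eq_ker_powMonoidHom hgen hη (by omega), cyclicNormHom_eq_powMonoidHom hη]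
    at hle ⊢
  rw [IsCyclic.relIndex_range_powMonoidHom_ker_powMonoidHom hle, hcard,
    Nat.gcd_pow_sub_one_geom_sum (by omega), ← hgeom, Nat.gcd_eq_right (Nat.dvd_mul_left _ _),
    Nat.mul_div_cancel _ (by omega : 0 < Q - 1), Nat.mul_div_cancel _ hgeom_pos]

/-- let the cyclic group `C_n = ⟨σ⟩` act on the field `F = F_{q^r}` with
`q^r` elements via `η(σ) = φ^k` (`φ` the Frobenius, `k ∣ r`, `(r/k) ∣ n`). Then the
second cohomology group `H²_η(C_n, F^*)` is cyclic of order `gcd(q^k - 1, nk/r)`. -/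
theorem H2_cyclic_of_gcd_order {G F : Type*} [Group G] [Field F] [Fintype F]
    (q r k n : ℕ) (hq : q.Prime) (hr : 0 < r) (hk : 0 < k) (hn : 0 < n)
    (hkr : k ∣ r) (hrkn : r / k ∣ n)
    (hF : Fintype.card F = q ^ r)
    (σ : G) (hgen : ∀ g : G, g ∈ Subgroup.zpowers σ) (hord : orderOf σ = n)
    (η : G →* RingAut F) (hη : ∀ x : F, η σ x = x ^ q ^ k) :
    IsCyclic (H2 η) ∧ Nat.card (H2 η) = Nat.gcd (q ^ k - 1) (n * k / r) := by
  obtain ⟨t, rfl⟩ := hkr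
  rw [Nat.mul_div_cancel_left t hk] at hrkn
  obtain ⟨w, rfl⟩ := hrkn
  have ht : 0 < t := Nat.pos_of_mul_pos_left hr
  have hQ : 2 ≤ q ^ k := hq.two_le.trans (Nat.le_self_pow hk.ne' q)
  have hσ : σ ^ (t * w) = 1 := hord ▸ pow_orderOf_eq_one σ
  have hcardF : Nat.card F = (q ^ k) ^ t := by rw [Nat.card_eq_fintype_card, hF, pow_mul]
  let iso := h2MulEquivFixedUnitsModNorms η hn hord hgen
  refine ⟨iso.isCyclic.mpr inferInstance, ?_⟩
  rw [Nat.card_congr iso.toEquiv, card_fixedUnitsModNorms hgen hσ hη hQ ht hcardF,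
    mul_comm k t, mul_right_comm t w k, Nat.mul_div_cancel_left w (by positivity)]
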